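/- For all tuples (i_n,…,i_1) ∈ {1,…,d}^n and (j_m,…,j_1) ∈ {1,…,d}^m, one has τ(P_{i_n,…,i_1}(x) · (P_{j_m,…,j_1}(x))*) = 1 if n = m and (i_n,…,i_1) = (j_n,…,j_1), and = 0 otherwise; that is, the family (P_{i_n,…,i_1}(x)) over all n ≥ 0 and all tuples is orthonormal for the inner product ⟨a,b⟩ := τ(a b*) on A. -/

import Mathlib

open scoped ComplexOrder TensorProduct

noncomputable section

/-- Free Chebyshev polynomials, indexed by a word read left-to-right:
`cheb [i_n, ..., i_1] = P_{i_n, ..., i_1}`. -/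
def cheb {d : ℕ} : List (Fin d) → FreeAlgebra ℂ (Fin d)
  | [] => 1
  | [i] => FreeAlgebra.ι ℂ i
  | i :: j :: t => FreeAlgebra.ι ℂ i * cheb (j :: t) - (if i = j then (1 : ℂ) else 0) • cheb t

/-- A faithful tracial state on a `*`-algebra. -/
def IsFaithfulTracialState {A : Type*} [Ring A] [StarRing A] [Algebra ℂ A]
    (τ : A →ₗ[ℂ] ℂ) : Prop :=
  τ 1 = 1 ∧ (∀ a : A, 0 ≤ τ (star a * a)) ∧ (∀ a : A, τ (star a * a) = 0 → a = 0) ∧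
    ∀ a b : A, τ (a * b) = τ (b * a)

/-- The `k`-th moment of the standard semicircle distribution on `[-2, 2]`. -/
def semicircleMoment (k : ℕ) : ℝ :=
  (1 / (2 * Real.pi)) * ∫ t in (-2 : ℝ)..2, t ^ k * Real.sqrt (4 - t ^ 2)

/-- `x` is a free semicircular system with respect to `τ`. -/
def IsFreeSemicircular {A : Type*} [Ring A] [StarRing A] [Algebra ℂ A] {d : ℕ}
    (τ : A →ₗ[ℂ] ℂ) (x : Fin d → A) : Prop :=
  (∀ i, star (x i) = x i) ∧
  (∀ i k, τ (x i ^ k) = (semicircleMoment k : ℂ)) ∧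
  ∀ (k : ℕ) (j : Fin (k + 1) → Fin d),
    (∀ s : Fin k, j s.castSucc ≠ j s.succ) →
    ∀ p : Fin (k + 1) → Polynomial ℂ,
      τ ((List.ofFn fun s : Fin (k + 1) =>
        Polynomial.aeval (x (j s)) (p s)
          - τ (Polynomial.aeval (x (j s)) (p s)) • (1 : A))).prod = 0

/-- The `L²`-norm `‖z‖₂ = τ(z z*)^{1/2}` associated with `τ`. -/
def l2norm {A : Type*} [Ring A] [StarRing A] [Algebra ℂ A] (τ : A →ₗ[ℂ] ℂ) (z : A) : ℝ :=
  Real.sqrt (τ (z * star z)).re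

/-- Noncommutative polynomials of degree at most `n`. -/
def degLE (d n : ℕ) : Submodule ℂ (FreeAlgebra ℂ (Fin d)) :=
  Submodule.span ℂ
    {w | ∃ I : List (Fin d), I.length ≤ n ∧ w = (I.map (FreeAlgebra.ι ℂ)).prod}

/-- Elements homogeneous of degree `n`. -/
def chebHomog {A : Type*} [Ring A] [Algebra ℂ A] {d : ℕ} (x : Fin d → A) (n : ℕ) :
    Submodule ℂ A :=
  Submodule.span ℂ
    {a | ∃ I : List (Fin d), I.length = n ∧ a = FreeAlgebra.lift ℂ x (cheb I)}

/-- `‖P_n f‖₂`, the `ℓ²`-norm of the degree-`n` free Chebyshev coefficients of `f`. -/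
def chebProjL2 {A : Type*} [Ring A] [StarRing A] [Algebra ℂ A] {d : ℕ}
    (τ : A →ₗ[ℂ] ℂ) (x : Fin d → A) (n : ℕ) (f : A) : ℝ :=
  Real.sqrt (∑ I : Fin n → Fin d,
    ‖τ (f * star (FreeAlgebra.lift ℂ x (cheb (List.ofFn I))))‖ ^ 2)

/-- The rescaled Chebyshev polynomials of the second kind, `𝒰_n(X) = U_n(X/2)`. -/
def chebU : ℕ → Polynomial ℂ
  | 0 => 1
  | 1 => Polynomial.X
  | n + 2 => Polynomial.X * chebU (n + 1) - chebU n

end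

/-! Write `P_L` for `cheb L` evaluated at `x`. Two facts suffice.

First, `τ (P_L) = 0` for every nonempty word `L`. Splitting `L` into maximal blocks `i^k` of a
repeated letter, `P_L` is the product of the `U_k(x_i)` over the blocks, with consecutive letters
distinct. Each factor is centred: substituting `t = 2 cos θ` and using
`U_k(2 cos θ) sin θ = sin ((k + 1) θ)`, the semicircle integral of `U_k` is a multiple of
`∫₀^π sin θ sin ((k + 1) θ) dθ = 0`. Freeness then kills the trace of the product.

Second, `x_i P_L = P_{iL} + [L starts with i] P_{tail L}`: multiplication by `x_i` is creation plus
annihilation. Moving `x_i` from `star (P_{iM})` around the trace onto `P_L` gives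
`τ (P_L star P_{iM})` in terms of inner products with shorter second word, and orthonormality
follows by induction on the length of that word. -/

open Polynomial Polynomial.Chebyshev Real intervalIntegral

theorem integral_cos_nat_mul (k : ℕ) :
    ∫ θ in (0 : ℝ)..π, cos (k * θ) = if k = 0 then π else 0 := by
  split_ifs with hk
  · simp [hk]
  · have hk' : (k : ℝ) ≠ 0 := Nat.cast_ne_zero.mpr hk
    rw [integral_comp_mul_left (fun θ => cos θ) hk', integral_cos, mul_zero, sin_zero,
      sin_nat_mul_pi, sub_self, smul_zero]

theorem integral_sin_mul_sin_nat_succ_mul (n : ℕ) :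
    ∫ θ in (0 : ℝ)..π, sin θ * sin ((n + 1) * θ) = if n = 0 then π / 2 else 0 := by
  have hprod : ∀ θ : ℝ, sin θ * sin ((n + 1) * θ)
      = (cos ((n : ℕ) * θ) - cos ((n + 2 : ℕ) * θ)) / 2 := fun θ => by
    have h1 : (n : ℝ) * θ = (n + 1) * θ - θ := by ring
    have h2 : ((n + 2 : ℕ) : ℝ) * θ = (n + 1) * θ + θ := by push_cast; ring
    rw [h1, h2, cos_sub, cos_add]; ring
  have hint : ∀ k : ℕ, IntervalIntegrable (fun θ => cos (k * θ)) MeasureTheory.volume 0 π :=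
    fun k => (by fun_prop : Continuous fun θ : ℝ => cos (k * θ)).intervalIntegrable _ _
  simp_rw [hprod]
  rw [integral_div, integral_sub (hint n) (hint (n + 2)), integral_cos_nat_mul,
    integral_cos_nat_mul]
  obtain rfl | hn := eq_or_ne n 0 <;> simp [*]

theorem integral_eval_S_mul_sqrt (n : ℕ) :
    ∫ t in (-2 : ℝ)..2, (S ℝ n).eval t * √(4 - t ^ 2) = if n = 0 then 2 * π else 0 := by
  have hsubst := integral_comp_mul_deriv (a := π) (b := 0) (f := fun θ => 2 * cos θ)
    (f' := fun θ => -(2 * sin θ)) (g := fun t => (S ℝ n).eval t * √(4 - t ^ 2))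
    (fun θ _ => by simpa using (hasDerivAt_cos θ).const_mul 2) (by fun_prop) (by fun_prop)
  have hsqrt : ∀ θ ∈ Set.uIcc 0 π, √(4 - (2 * cos θ) ^ 2) = 2 * sin θ := fun θ hθ => by
    rw [Set.uIcc_of_le pi_pos.le] at hθ
    rw [show 4 - (2 * cos θ) ^ 2 = (2 * sin θ) ^ 2 by nlinarith [sin_sq_add_cos_sq θ],
      sqrt_sq (by nlinarith [sin_nonneg_of_nonneg_of_le_pi hθ.1 hθ.2])]
  simp only [cos_pi, cos_zero] at hsubst
  norm_num at hsubst
  rw [← hsubst, integral_symm, neg_neg,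
    integral_congr (g := fun θ => 4 * (sin θ * sin ((n + 1) * θ))) fun θ hθ => by
      have hS := S_two_mul_real_cos θ n
      push_cast at hS
      simp only [hsqrt θ hθ]
      linear_combination 4 * sin θ * hS,
    intervalIntegral.integral_const_mul, integral_sin_mul_sin_nat_succ_mul]
  split_ifs <;> ring

theorem chebU_eq_S : ∀ n : ℕ, chebU n = S ℂ n
  | 0 => by simp [chebU]
  | 1 => by simp [chebU]
  | n + 2 => by
    rw [chebU, chebU_eq_S (n + 1), chebU_eq_S n, show ((n + 2 : ℕ) : ℤ) = n + 2 by push_cast; rfl,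
      S_add_two]
    push_cast; rfl

section SemicircleMoments

variable {A : Type*} [Ring A] [Algebra ℂ A]

theorem trace_aeval_eq_integral (τ : A →ₗ[ℂ] ℂ) (a : A)
    (hm : ∀ k, τ (a ^ k) = (semicircleMoment k : ℂ)) (p : ℝ[X]) :
    τ (aeval a p) = ((1 / (2 * π) * ∫ t in (-2 : ℝ)..2, p.eval t * √(4 - t ^ 2) : ℝ) : ℂ) := by
  induction p using Polynomial.induction_on' with
  | add p q hp hq =>
    have hint : ∀ r : ℝ[X], IntervalIntegrable (fun t => r.eval t * √(4 - t ^ 2))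
        MeasureTheory.volume (-2) 2 :=
      fun r => (by fun_prop : Continuous fun t => r.eval t * √(4 - t ^ 2)).intervalIntegrable _ _
    simp only [map_add, hp, hq, eval_add, add_mul, integral_add (hint p) (hint q)]
    push_cast; ring
  | monomial k c =>
    rw [aeval_monomial, ← Algebra.smul_def, LinearMap.map_smul_of_tower, hm, semicircleMoment]
    simp only [eval_monomial, mul_assoc, intervalIntegral.integral_const_mul]
    push_cast; rw [Complex.real_smul]; ring

theorem trace_aeval_chebU (τ : A →ₗ[ℂ] ℂ) (a : A)
    (hm : ∀ k, τ (a ^ k) = (semicircleMoment k : ℂ)) (n : ℕ) :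
    τ (aeval a (chebU n)) = if n = 0 then 1 else 0 := by
  rw [chebU_eq_S, ← map_S (algebraMap ℝ ℂ), aeval_map_algebraMap, trace_aeval_eq_integral τ a hm,
    integral_eval_S_mul_sqrt]
  split_ifs
  · field_simp [pi_ne_zero]; simp
  · simp

end SemicircleMoments

section FreeAlgebra

variable {d : ℕ}

theorem cheb_cons (i : Fin d) (L : List (Fin d)) :
    cheb (i :: L) = FreeAlgebra.ι ℂ i * cheb L - if L.head? = some i then cheb L.tail else 0 := by
  cases L with
  | nil => simp [cheb]
  | cons j t =>
    rw [cheb.eq_3]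
    by_cases hij : i = j
    · simp [hij]
    · simp [hij, Ne.symm hij]

theorem cheb_replicate_append (i : Fin d) {N : List (Fin d)} (hN : N.head? ≠ some i) :
    ∀ k, cheb (List.replicate k i ++ N) = aeval (FreeAlgebra.ι ℂ i) (chebU k) * cheb N
  | 0 => by simp [chebU]
  | 1 => by
    cases N with
    | nil => simp [cheb, chebU]
    | cons j t =>
      have hij : i ≠ j := fun h => hN (by simp [h])
      simp [cheb.eq_3, chebU, hij]
  | k + 2 => by
    rw [List.replicate_succ, List.cons_append, List.replicate_succ, List.cons_append, cheb.eq_3,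
      ← List.cons_append, ← List.replicate_succ, cheb_replicate_append i hN (k + 1),
      cheb_replicate_append i hN k, chebU]
    simp [mul_assoc, sub_mul]

theorem exists_cons_eq_replicate_append (i : Fin d) (t : List (Fin d)) :
    ∃ k N, i :: t = List.replicate (k + 1) i ++ N ∧ N.head? ≠ some i := by
  induction t with
  | nil => exact ⟨0, [], by simp, by simp⟩
  | cons j s ih =>
    by_cases hij : j = i
    · obtain ⟨k, N, hs, hN⟩ := ih
      exact ⟨k + 1, N, by rw [hij, hs]; rfl, hN⟩
    · exact ⟨0, j :: s, rfl, by simpa using hij⟩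

theorem exists_cheb_eq_prod_chebU (M : List (Fin d)) :
    ∃ bs : List (Fin d × ℕ), (bs.map Prod.fst).head? = M.head? ∧
      bs.IsChain (fun b c => b.1 ≠ c.1) ∧ (∀ b ∈ bs, b.2 ≠ 0) ∧
      cheb M = (bs.map fun b => aeval (FreeAlgebra.ι ℂ b.1) (chebU b.2)).prod := by
  induction h : M.length using Nat.strong_induction_on generalizing M with
  | _ n ih =>
    cases M with
    | nil => exact ⟨[], by simp, by simp, by simp, by simp [cheb]⟩
    | cons i t =>
      obtain ⟨k, N, hM, hN⟩ := exists_cons_eq_replicate_append i t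
      have hlen : N.length < n := by
        rw [← h, hM, List.length_append, List.length_replicate]; omega
      obtain ⟨bs, hhead, hchain, hpos, hcheb⟩ := ih _ hlen N rfl
      refine ⟨(i, k + 1) :: bs, by simp, ?_, ?_, ?_⟩
      · cases bs with
        | nil => simp
        | cons b bs =>
          refine List.IsChain.cons_cons (fun hb => hN ?_) hchain
          simp_all
      · simpa using hpos
      · rw [hM, cheb_replicate_append i hN, hcheb, List.map_cons, List.prod_cons]

end FreeAlgebra

section Trace

variable {d : ℕ} {A : Type*} [Ring A] [StarRing A] [Algebra ℂ A]

theorem IsFreeSemicircular.trace_prod_aeval_eq_zero {τ : A →ₗ[ℂ] ℂ} {x : Fin d → A}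
    (hx : IsFreeSemicircular τ x) {bs : List (Fin d × ℂ[X])} (hne : bs ≠ [])
    (hchain : bs.IsChain fun b c => b.1 ≠ c.1) (hcent : ∀ b ∈ bs, τ (aeval (x b.1) b.2) = 0) :
    τ (bs.map fun b => aeval (x b.1) b.2).prod = 0 := by
  obtain ⟨b, br, rfl⟩ := List.exists_cons_of_ne_nil hne
  have hfree := hx.2.2 br.length (fun s => (b :: br)[s.1].1)
    (fun s => List.isChain_iff_getElem.1 hchain s.1 (by simp)) (fun s => (b :: br)[s.1].2)
  have hcentered : (b :: br).map (fun c => aeval (x c.1) c.2)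
      = (b :: br).map fun c => aeval (x c.1) c.2 - τ (aeval (x c.1) c.2) • (1 : A) :=
    List.map_congr_left fun c hc => by rw [hcent c hc, zero_smul, sub_zero]
  rw [hcentered, ← List.ofFn_getElem_eq_map]
  exact hfree

theorem trace_lift_cheb {τ : A →ₗ[ℂ] ℂ} {x : Fin d → A} (h1 : τ 1 = 1)
    (hx : IsFreeSemicircular τ x) (M : List (Fin d)) :
    τ (FreeAlgebra.lift ℂ x (cheb M)) = if M = [] then 1 else 0 := by
  split_ifs with hM
  · simp [hM, cheb, h1]
  obtain ⟨bs, hhead, hchain, hpos, hcheb⟩ := exists_cheb_eq_prod_chebU M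
  have hne : bs ≠ [] := by rintro rfl; cases M <;> simp_all
  have hlift : ∀ b : Fin d × ℕ, FreeAlgebra.lift ℂ x (aeval (FreeAlgebra.ι ℂ b.1) (chebU b.2))
      = aeval (x b.1) (chebU b.2) := fun b => by
    rw [← aeval_algHom_apply, FreeAlgebra.lift_ι_apply]
  rw [hcheb, map_list_prod, List.map_map, Function.comp_def]
  simp only [hlift]
  have h := hx.trace_prod_aeval_eq_zero (bs := bs.map fun b => (b.1, chebU b.2)) (by simpa using hne)
      (List.isChain_map _ |>.2 hchain)
      fun c hc => by
        obtain ⟨b, hb, rfl⟩ := List.mem_map.1 hc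
        exact (trace_aeval_chebU τ _ (hx.2.1 _) b.2).trans (if_neg (hpos b hb))
  rwa [List.map_map] at h

end Trace

section Orthonormal

variable {ι A : Type*} [DecidableEq ι] [Ring A] [StarRing A] [Algebra ℂ A]

theorem trace_mul_star_eq_ite {τ : A →ₗ[ℂ] ℂ} {x : ι → A} {P : List ι → A}
    (htrace : ∀ a b, τ (a * b) = τ (b * a)) (hsa : ∀ i, star (x i) = x i)
    (hP_nil : P [] = 1)
    (hP_cons : ∀ i L, P (i :: L) = x i * P L - if L.head? = some i then P L.tail else 0)
    (hP_trace : ∀ M, τ (P M) = if M = [] then 1 else 0) (L M : List ι) :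
    τ (P L * star (P M)) = if L = M then 1 else 0 := by
  induction h : M.length using Nat.strong_induction_on generalizing L M with
  | _ n ih =>
    cases M with
    | nil => simpa [hP_nil, eq_comm] using hP_trace L
    | cons i N =>
      simp only [List.length_cons] at h
      have hcreate : τ (P L * star (P N) * x i) = (if i :: L = N then 1 else 0)
          + if L = i :: N then 1 else 0 := by
        rw [htrace, ← mul_assoc, sub_eq_iff_eq_add.mp (hP_cons i L).symm, add_mul, map_add,
          ih N.length (by omega) _ _ rfl]
        congr 1
        cases L with
        | nil => simp
        | cons j t => by_cases hij : j = i <;> simp [hij, ih N.length (by omega) _ _ rfl]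
      have hannihilate : τ (P L * star (if N.head? = some i then P N.tail else 0))
          = if i :: L = N then 1 else 0 := by
        cases N with
        | nil => simp
        | cons j t =>
          by_cases hij : j = i
          · simp [hij, ih t.length (by simp at h; omega) _ _ rfl]
          · simp [hij, Ne.symm hij]
      rw [hP_cons, star_sub, star_mul, hsa, mul_sub, map_sub, ← mul_assoc, hcreate, hannihilate]
      ring

end Orthonormal

theorem cheb_orthonormal_general {d : ℕ} {A : Type*} [NormedRing A] [StarRing A]
    [NormedAlgebra ℂ A]
    (τ : A →ₗ[ℂ] ℂ) (x : Fin d → A)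
    (hτ : IsFaithfulTracialState τ) (hx : IsFreeSemicircular τ x)
    (L M : List (Fin d)) :
    τ (FreeAlgebra.lift ℂ x (cheb L) * star (FreeAlgebra.lift ℂ x (cheb M))) =
      if L = M then 1 else 0 := by
  obtain ⟨hτ_one, -, -, htrace⟩ := hτ
  refine trace_mul_star_eq_ite htrace hx.1 (map_one _) (fun i L => ?_)
    (trace_lift_cheb hτ_one hx) L M
  rw [cheb_cons, map_sub, map_mul, FreeAlgebra.lift_ι_apply, apply_ite (FreeAlgebra.lift ℂ x),
    map_zero]

/-- Orthonormality of the evaluated free Chebyshev polynomials with respect to the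
inner product `⟨a, b⟩ = τ(a b*)`. -/
theorem cheb_orthonormal {d : ℕ} {A : Type*} [NormedRing A] [StarRing A]
    [CStarRing A] [CompleteSpace A] [NormedAlgebra ℂ A] [StarModule ℂ A]
    (τ : A →ₗ[ℂ] ℂ) (x : Fin d → A)
    (hτ : IsFaithfulTracialState τ) (hx : IsFreeSemicircular τ x)
    (L M : List (Fin d)) :
    τ (FreeAlgebra.lift ℂ x (cheb L) * star (FreeAlgebra.lift ℂ x (cheb M))) =
      if L = M then 1 else 0 :=
  cheb_orthonormal_general τ x hτ hx L M
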